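/- Suppose for two policies with reachability probabilities p1, p2 ∈ [0,1] and shaped rewards s1, s2 satisfying s1 ≥ p1·(P(0) - P(d0)) + (1 - p1)·(P(D) - P(d0)) and s2 ≤ p2·(P(0) - P(d0)) + (1 - p2)·(P(1) - P(d0)), where P(0) = 1, P(1) - P(D) = κ > 0, and P(D) ≤ 0. If κ < p1 - p2 then s1 > s2. -/
import Mathlib

theorem stmt4 (P : ℕ → ℝ) (d0 D : ℕ) (κ p1 p2 s1 s2 : ℝ)
    (hp1 : p1 ∈ Set.Icc (0:ℝ) 1) (hp2 : p2 ∈ Set.Icc (0:ℝ) 1)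
    (hP0 : P 0 = 1) (hκdef : P 1 - P D = κ) (hκpos : 0 < κ) (hPD : P D ≤ 0)
    (hs1 : s1 ≥ p1 * (P 0 - P d0) + (1 - p1) * (P D - P d0))
    (hs2 : s2 ≤ p2 * (P 0 - P d0) + (1 - p2) * (P 1 - P d0))
    (hκ : κ < p1 - p2) :
    s1 > s2 := by
  obtain ⟨h1, h2⟩ := hp1
  obtain ⟨h3, h4⟩ := hp2
  nlinarith [mul_nonneg h1 hκpos.le, mul_nonneg h3 hκpos.le,
    mul_nonneg (sub_nonneg.2 h2) (neg_nonneg.2 hPD),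
    mul_nonneg (sub_nonneg.2 h4) (neg_nonneg.2 hPD)]
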